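/- arXiv:2410.01052 — 3 statements merged into one kernel-verified Lean document; each statement's English description precedes it below -/
import Mathlib

section
/- Let F = F_{0,1}. Then p = (−1/5, 2/5) is a fixed point of F; the sets P = {(1, 0), (−1, 0), (1, 2)} and Q = {(−1/3, 0), (1/3, 2/3), (−1/3, 2/3)} are periodic orbits of F of minimal period 3; and for every (x, y) ∈ ℝ² with (x, y) ≠ p there exists n ∈ ℕ such that F^n(x, y) ∈ P ∪ Q. -/
/-- The piecewise linear map `F_{a,b}(x,y) = (|x| - y + a, x - |y| + b)`. -/
noncomputable def F (a b : ℝ) : ℝ × ℝ → ℝ × ℝ :=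
  fun p => (|p.1| - p.2 + a, p.1 - |p.2| + b)

/-- `S` is a periodic orbit of `f` of minimal period `n`: it is the (finite) orbit
`{p, f p, …, f^[n-1] p}` of some periodic point `p` of minimal period `n`. -/
def IsPeriodicOrbit (f : ℝ × ℝ → ℝ × ℝ) (n : ℕ) (S : Set (ℝ × ℝ)) : Prop :=
  ∃ p : ℝ × ℝ, Function.minimalPeriod f p = n ∧ 0 < n ∧
    S = (fun k : ℕ => f^[k] p) '' Set.Iio n

/-!
Off the fixed point `p = (-1/5, 2/5)` every orbit escapes the region where `F²` is the affine
map `(x, y) ↦ (2y - 1, -2x)`, which doubles the sup-distance to `p`. Any other point is driven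
in a few explicit steps onto the horizontal axis. There `F³(s, 0) = (4s + 1, 0)` for
`-1/2 ≤ s ≤ 0`, which quadruples the distance to `-1/3`, so the orbit of `(s, 0)` either is the
3-cycle through `(-1/3, 0)` or leaves `[-1/2, 0]` and falls onto the 3-cycle through `(-1, 0)`.
-/

def Reaches {α : Type*} (f : α → α) (S : Set α) (x : α) : Prop :=
  ∃ n : ℕ, f^[n] x ∈ S

namespace Reaches

variable {α : Type*} {f : α → α} {S : Set α} {x : α}

theorem of_mem (hx : x ∈ S) : Reaches f S x :=
  ⟨0, hx⟩

theorem of_iterate {m : ℕ} (h : Reaches f S (f^[m] x)) : Reaches f S x := by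
  obtain ⟨n, hn⟩ := h
  exact ⟨n + m, by rwa [Function.iterate_add_apply]⟩

theorem of_map_eq {y : α} (hxy : f x = y) (h : Reaches f S y) : Reaches f S x :=
  of_iterate (m := 1) (by rwa [Function.iterate_one, hxy])

end Reaches

theorem induction_of_expanding {α : Type*} {P : α → Prop} {g : α → α} {R : Set α} {V : α → ℝ}
    {B c : ℝ} (hc : 1 < c) (hout : ∀ x ∉ R, P x) (hback : ∀ x ∈ R, P (g x) → P x)
    (hbdd : ∀ x ∈ R, V x ≤ B) (hexp : ∀ x ∈ R, c * V x ≤ V (g x)) {x : α} (hx : 0 < V x) :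
    P x := by
  have key : ∀ k : ℕ, ∀ x, B < c ^ k * V x → P x := by
    intro k
    induction k with
    | zero =>
      intro x hx
      rw [pow_zero, one_mul] at hx
      exact hout x fun hR => (hbdd x hR).not_gt hx
    | succ k ih =>
      intro x hx
      by_cases hR : x ∈ R
      · refine hback x hR (ih _ ?_)
        calc B < c ^ (k + 1) * V x := hx
          _ = c ^ k * (c * V x) := by ring
          _ ≤ c ^ k * V (g x) := by gcongr; exact hexp x hR
      · exact hout x hR
  obtain ⟨k, hk⟩ := pow_unbounded_of_one_lt (B / V x) hc
  exact key k x (by rwa [div_lt_iff₀ hx] at hk)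

theorem isPeriodicOrbit_three {f : ℝ × ℝ → ℝ × ℝ} {p q r : ℝ × ℝ} (hpq : f p = q)
    (hqr : f q = r) (hrp : f r = p) (hne : q ≠ p) : IsPeriodicOrbit f 3 {p, q, r} := by
  have hper : Function.IsPeriodicPt f 3 p := by
    simp [Function.IsPeriodicPt, Function.IsFixedPt, hpq, hqr, hrp]
  refine ⟨p, ?_, by norm_num, ?_⟩
  · rcases Nat.prime_three.eq_one_or_self_of_dvd _ hper.minimalPeriod_dvd with h | h
    · exact absurd (hpq ▸ Function.minimalPeriod_eq_one_iff_isFixedPt.mp h) hne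
    · exact h
  · have hIio : Set.Iio 3 = ({0, 1, 2} : Set ℕ) := by
      ext n
      simp only [Set.mem_Iio, Set.mem_insert_iff, Set.mem_singleton_iff]
      omega
    simp [hIio, Set.image_insert_eq, hpq, hqr]

section Quadrants

variable {a b x y : ℝ}

theorem F_of_nonneg_of_nonneg (hx : 0 ≤ x) (hy : 0 ≤ y) :
    F a b (x, y) = (x - y + a, x - y + b) := by
  simp [F, abs_of_nonneg hx, abs_of_nonneg hy]

theorem F_of_nonpos_of_nonneg (hx : x ≤ 0) (hy : 0 ≤ y) :
    F a b (x, y) = (-x - y + a, x - y + b) := by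
  simp [F, abs_of_nonpos hx, abs_of_nonneg hy]

theorem F_of_nonpos_of_nonpos (hx : x ≤ 0) (hy : y ≤ 0) :
    F a b (x, y) = (-x - y + a, x + y + b) := by
  simp [F, abs_of_nonpos hx, abs_of_nonpos hy]

theorem F_of_nonneg_of_nonpos (hx : 0 ≤ x) (hy : y ≤ 0) :
    F a b (x, y) = (x - y + a, x + y + b) := by
  simp [F, abs_of_nonneg hx, abs_of_nonpos hy]

end Quadrants

def attractor : Set (ℝ × ℝ) :=
  ({(1, 0), (-1, 0), (1, 2)} : Set (ℝ × ℝ)) ∪ {(-1/3, 0), (1/3, 2/3), (-1/3, 2/3)}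

local notation "Reach" => Reaches (F 0 1) attractor

theorem reach_neg_one_zero : Reach (-1, 0) :=
  .of_mem (by simp [attractor])

theorem reach_axis_of_nonneg {s : ℝ} (hs : 0 ≤ s) : Reach (s, 0) := by
  have h₁ : F 0 1 (s, 0) = (s, s + 1) := by
    rw [F_of_nonneg_of_nonneg hs le_rfl]; ext <;> ring
  have h₂ : F 0 1 (s, s + 1) = (-1, 0) := by
    rw [F_of_nonneg_of_nonneg hs (by linarith)]; ext <;> ring
  exact .of_map_eq h₁ (.of_map_eq h₂ reach_neg_one_zero)

theorem F_iterate_two_axis {s : ℝ} (h₁ : -1 ≤ s) (h₂ : s ≤ 0) :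
    (F 0 1)^[2] (s, 0) = (-2 * s - 1, -2 * s) := by
  rw [Function.iterate_succ_apply', Function.iterate_one, F_of_nonpos_of_nonneg h₂ le_rfl,
    F_of_nonneg_of_nonneg (by linarith) (by linarith)]
  ext <;> ring

theorem reach_axis_of_le_neg_half {s : ℝ} (h₁ : -1 ≤ s) (h₂ : s ≤ -1/2) : Reach (s, 0) := by
  have h₃ : F 0 1 (-2 * s - 1, -2 * s) = (-1, 0) := by
    rw [F_of_nonneg_of_nonneg (by linarith) (by linarith)]; ext <;> ring
  refine .of_iterate (m := 2) ?_
  rw [F_iterate_two_axis h₁ (by linarith)]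
  exact .of_map_eq h₃ reach_neg_one_zero

theorem F_iterate_three_axis {s : ℝ} (h₁ : -1/2 ≤ s) (h₂ : s ≤ 0) :
    (F 0 1)^[3] (s, 0) = (4 * s + 1, 0) := by
  rw [Function.iterate_succ_apply', F_iterate_two_axis (by linarith) h₂,
    F_of_nonpos_of_nonneg (by linarith) (by linarith)]
  ext <;> ring

theorem reach_axis {s : ℝ} (hs : -1 ≤ s) : Reach (s, 0) := by
  rcases eq_or_ne s (-1/3) with rfl | hne
  · exact .of_mem (by simp [attractor])
  refine induction_of_expanding (P := fun s => -1 ≤ s → Reach (s, 0)) (g := fun s => 4 * s + 1)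
    (R := Set.Ioo (-1/2) (-1/6)) (V := fun s => dist s (-1/3)) (B := 1/6) (c := 4)
    (by norm_num) ?_ ?_ ?_ ?_ (dist_pos.mpr hne) hs
  · intro s hR h₁
    rw [Set.mem_Ioo, not_and_or, not_lt, not_lt] at hR
    rcases hR with hR | hR
    · exact reach_axis_of_le_neg_half h₁ hR
    rcases le_total 0 s with h₀ | h₀
    · exact reach_axis_of_nonneg h₀
    · refine .of_iterate (m := 3) ?_
      rw [F_iterate_three_axis (by linarith) h₀]
      exact reach_axis_of_nonneg (by linarith)
  · intro s ⟨h₁, h₂⟩ h _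
    refine .of_iterate (m := 3) ?_
    rw [F_iterate_three_axis h₁.le (by linarith)]
    exact h (by linarith)
  · intro s ⟨h₁, h₂⟩
    rw [Real.dist_eq, abs_le]; constructor <;> linarith
  · intro s _
    rw [Real.dist_eq, Real.dist_eq, show 4 * s + 1 - -1/3 = 4 * (s - -1/3) by ring, abs_mul,
      abs_of_pos (four_pos : (0 : ℝ) < 4)]

theorem reach_line_of_neg_one_le {t : ℝ} (ht : -1 ≤ t) : Reach (t, t + 1) := by
  rcases le_total 0 t with h₀ | h₀
  · have h : F 0 1 (t, t + 1) = (-1, 0) := by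
      rw [F_of_nonneg_of_nonneg h₀ (by linarith)]; ext <;> ring
    exact .of_map_eq h (reach_axis le_rfl)
  · have h : F 0 1 (t, t + 1) = (-2 * t - 1, 0) := by
      rw [F_of_nonpos_of_nonneg h₀ (by linarith)]; ext <;> ring
    exact .of_map_eq h (reach_axis (by linarith))

theorem reach_line (t : ℝ) : Reach (t, t + 1) := by
  rcases le_or_gt (-1) t with ht | ht
  · exact reach_line_of_neg_one_le ht
  have h₁ : F 0 1 (t, t + 1) = (-2 * t - 1, 2 * t + 2) := by
    rw [F_of_nonpos_of_nonpos (by linarith) (by linarith)]; ext <;> ring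
  have h₂ : F 0 1 (-2 * t - 1, 2 * t + 2) = (-4 * t - 3, 2) := by
    rw [F_of_nonneg_of_nonpos (by linarith) (by linarith)]; ext <;> ring
  have h₃ : F 0 1 (-4 * t - 3, 2) = (-4 * t - 5, -4 * t - 5 + 1) := by
    rw [F_of_nonneg_of_nonneg (by linarith) (by norm_num)]; ext <;> ring
  exact .of_map_eq h₁ <| .of_map_eq h₂ <| .of_map_eq h₃ <| reach_line_of_neg_one_le (by linarith)

theorem reach_of_nonneg_of_nonneg {x y : ℝ} (hx : 0 ≤ x) (hy : 0 ≤ y) : Reach (x, y) :=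
  .of_map_eq (F_of_nonneg_of_nonneg hx hy) (by simpa using reach_line (x - y))

theorem reach_of_nonneg {x y : ℝ} (hx : 0 ≤ x) : Reach (x, y) := by
  rcases le_total 0 y with hy | hy
  · exact reach_of_nonneg_of_nonneg hx hy
  have h₁ : F 0 1 (x, y) = (x - y, x + y + 1) := by
    rw [F_of_nonneg_of_nonpos hx hy]; ext <;> ring
  refine .of_map_eq h₁ ?_
  rcases le_total 0 (x + y + 1) with h | h
  · exact reach_of_nonneg_of_nonneg (by linarith) h
  have h₂ : F 0 1 (x - y, x + y + 1) = (-2 * y - 1, 2 * x + 2) := by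
    rw [F_of_nonneg_of_nonpos (by linarith) h]; ext <;> ring
  exact .of_map_eq h₂ (reach_of_nonneg_of_nonneg (by linarith) (by linarith))

theorem reach_of_nonpos_of_nonpos {x y : ℝ} (hx : x ≤ 0) (hy : y ≤ 0) : Reach (x, y) :=
  .of_map_eq (F_of_nonpos_of_nonpos hx hy) (reach_of_nonneg (by linarith))

/-- The points that `F 0 1` keeps in the closed second quadrant for one more step. -/
def expansionRegion : Set (ℝ × ℝ) :=
  {q | q.1 ≤ 0 ∧ 0 ≤ q.2 ∧ 0 ≤ q.1 + q.2 ∧ 0 ≤ q.1 - q.2 + 1}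

theorem reach_of_notMem_expansionRegion {q : ℝ × ℝ} (hq : q ∉ expansionRegion) : Reach q := by
  obtain ⟨x, y⟩ := q
  rcases le_total 0 x with hx | hx
  · exact reach_of_nonneg hx
  rcases le_total y 0 with hy | hy
  · exact reach_of_nonpos_of_nonpos hx hy
  refine .of_map_eq (F_of_nonpos_of_nonneg hx hy) ?_
  rcases le_total (x + y) 0 with hxy | hxy
  · exact reach_of_nonneg (by linarith)
  have hd : x - y + 1 < 0 := by
    by_contra! hd
    exact hq ⟨hx, hy, hxy, hd⟩
  exact reach_of_nonpos_of_nonpos (by linarith) (by linarith)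

theorem F_iterate_two_of_mem_expansionRegion {q : ℝ × ℝ} (hq : q ∈ expansionRegion) :
    (F 0 1)^[2] q = (2 * q.2 - 1, -2 * q.1) := by
  obtain ⟨x, y⟩ := q
  obtain ⟨hx, hy, hxy, hd⟩ := hq
  rw [Function.iterate_succ_apply', Function.iterate_one, F_of_nonpos_of_nonneg hx hy,
    F_of_nonpos_of_nonneg (by linarith) (by linarith)]
  ext <;> ring

theorem reach_of_ne_fixedPoint {q : ℝ × ℝ} (hq : q ≠ (-1/5, 2/5)) : Reach q := by
  refine induction_of_expanding (P := Reach) (g := (F 0 1)^[2]) (R := expansionRegion)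
    (V := fun q => dist q (-1/5, 2/5)) (B := 1) (c := 2) (by norm_num)
    (fun q hq => reach_of_notMem_expansionRegion hq) (fun q _ => .of_iterate) ?_ ?_
    (dist_pos.mpr hq)
  · rintro ⟨x, y⟩ ⟨hx, hy, hxy, hd⟩
    simp only [Prod.dist_eq, Real.dist_eq, max_le_iff, abs_le]
    refine ⟨⟨?_, ?_⟩, ?_, ?_⟩ <;> linarith
  · intro q hq
    have h₁ : |2 * q.2 - 1 - -1/5| = 2 * |q.2 - 2/5| := by
      rw [show 2 * q.2 - 1 - -1/5 = 2 * (q.2 - 2/5) by ring, abs_mul, abs_two]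
    have h₂ : |-2 * q.1 - 2/5| = 2 * |q.1 - -1/5| := by
      rw [show -2 * q.1 - 2/5 = -2 * (q.1 - -1/5) by ring, abs_mul, abs_neg, abs_two]
    simp only [F_iterate_two_of_mem_expansionRegion hq, Prod.dist_eq, Real.dist_eq, h₁, h₂]
    rw [mul_max_of_nonneg _ _ zero_le_two, max_comm]

/-- For `F = F_{0,1}`: `p = (-1/5, 2/5)` is a fixed point, `P` and `Q` are 3-periodic
orbits, and every point other than `p` eventually lands in `P ∪ Q`. -/
theorem case_a_zero_b_one :
    F 0 1 (-1/5, 2/5) = (-1/5, 2/5) ∧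
    IsPeriodicOrbit (F 0 1) 3 {(1, 0), (-1, 0), (1, 2)} ∧
    IsPeriodicOrbit (F 0 1) 3 {(-1/3, 0), (1/3, 2/3), (-1/3, 2/3)} ∧
    ∀ x : ℝ × ℝ, x ≠ (-1/5, 2/5) →
      ∃ n : ℕ, (F 0 1)^[n] x ∈
        (({(1, 0), (-1, 0), (1, 2)} : Set (ℝ × ℝ)) ∪
         {(-1/3, 0), (1/3, 2/3), (-1/3, 2/3)}) := by
  refine ⟨?_, ?_, ?_, fun x hx => reach_of_ne_fixedPoint hx⟩
  · rw [F_of_nonpos_of_nonneg (by norm_num) (by norm_num)]; norm_num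
  · rw [Set.pair_comm]
    refine isPeriodicOrbit_three ?_ ?_ ?_ (by norm_num)
    · rw [F_of_nonneg_of_nonneg (by norm_num) le_rfl]; norm_num
    · rw [F_of_nonneg_of_nonneg (by norm_num) (by norm_num)]; norm_num
    · rw [F_of_nonpos_of_nonneg (by norm_num) le_rfl]; norm_num
  · refine isPeriodicOrbit_three ?_ ?_ ?_ (by norm_num)
    · rw [F_of_nonpos_of_nonneg (by norm_num) le_rfl]; norm_num
    · rw [F_of_nonneg_of_nonneg (by norm_num) (by norm_num)]; norm_num
    · rw [F_of_nonpos_of_nonneg (by norm_num) (by norm_num)]; norm_num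
end

section
/- Let F = F_{0,−1}. Then (1, 0) is a fixed point of F, F^4(x, y) ∈ Q₁ for every (x, y) ∈ ℝ², and F^6(x, y) = (1, 0) for every (x, y) ∈ ℝ². -/
/-- The closed first quadrant. -/
def Q1 : Set (ℝ × ℝ) := {p | 0 ≤ p.1 ∧ 0 ≤ p.2}

/-!
Each application of `F = F_{0,-1}` moves a point one region further down the nested chain
`{y ≤ x - 1} ⊇ {1 ≤ x, y ≤ x - 1} ⊇ {|y| ≤ x - 1} ⊇ {0 ≤ y ≤ x - 1} ⊇ {0 ≤ y = x - 1}`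
ending at `(1, 0)`. The whole plane enters the first region in one step, because
`(F p).1 - (F p).2 = (|x| - x) + (|y| - y) + 1 ≥ 1`.
On the wedge `{0 ≤ y ≤ x - 1} ⊆ Q₁` the map is affine: `F (x, y) = (x - y, x - y - 1)`.
-/

open Set

lemma F_fst_sub_F_snd_ge (a b : ℝ) (p : ℝ × ℝ) :
    a - b ≤ (F a b p).1 - (F a b p).2 := by
  simp only [F]
  linarith [le_abs_self p.1, le_abs_self p.2]

lemma F_fst_ge (a b : ℝ) (p : ℝ × ℝ) : p.1 - p.2 + a ≤ (F a b p).1 := by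
  simp only [F]
  linarith [le_abs_self p.1]

lemma F_of_mem_Q1 (a b : ℝ) {p : ℝ × ℝ} (hp : p ∈ Q1) :
    F a b p = (p.1 - p.2 + a, p.1 - p.2 + b) := by
  simp only [F, abs_of_nonneg hp.1, abs_of_nonneg hp.2]

lemma mapsTo_F_univ : MapsTo (F 0 (-1)) univ {p | p.2 ≤ p.1 - 1} := fun p _ => by
  have := F_fst_sub_F_snd_ge 0 (-1) p
  simp only [mem_ofPred_eq]
  linarith

lemma mapsTo_F_sub_le :
    MapsTo (F 0 (-1)) {p | p.2 ≤ p.1 - 1} {p | 1 ≤ p.1 ∧ p.2 ≤ p.1 - 1} := fun p hp =>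
  ⟨by linarith [F_fst_ge 0 (-1) p, show p.2 ≤ p.1 - 1 from hp], mapsTo_F_univ (mem_univ p)⟩

lemma mapsTo_F_one_le :
    MapsTo (F 0 (-1)) {p | 1 ≤ p.1 ∧ p.2 ≤ p.1 - 1} {p | |p.2| ≤ p.1 - 1} := by
  rintro ⟨x, y⟩ ⟨hx, hxy⟩
  simp only [F, mem_ofPred_eq, abs_of_nonneg (by linarith : (0 : ℝ) ≤ x)] at hxy ⊢
  rw [abs_le]
  constructor <;> cases abs_cases y <;> linarith

lemma mapsTo_F_abs_le :
    MapsTo (F 0 (-1)) {p | |p.2| ≤ p.1 - 1} {p | 0 ≤ p.2 ∧ p.2 ≤ p.1 - 1} := by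
  intro p hp
  have hx : 0 ≤ p.1 := by linarith [abs_nonneg p.2, show |p.2| ≤ p.1 - 1 from hp]
  refine ⟨?_, mapsTo_F_univ (mem_univ p)⟩
  simp only [F, mem_ofPred_eq, abs_of_nonneg hx] at hp ⊢
  linarith

lemma mapsTo_F_wedge :
    MapsTo (F 0 (-1)) {p | 0 ≤ p.2 ∧ p.2 ≤ p.1 - 1}
      {p | 0 ≤ p.2 ∧ p.2 = p.1 - 1} := by
  rintro p ⟨hy, hxy⟩
  rw [F_of_mem_Q1 0 (-1) ⟨by linarith, hy⟩]
  constructor <;> simp only <;> linarith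

lemma mapsTo_F_ray : MapsTo (F 0 (-1)) {p | 0 ≤ p.2 ∧ p.2 = p.1 - 1} {(1, 0)} := by
  rintro p ⟨hy, hxy⟩
  rw [F_of_mem_Q1 0 (-1) ⟨by linarith, hy⟩, mem_singleton_iff, hxy]
  norm_num

/-- For `F = F_{0,-1}`: `(1,0)` is a fixed point, `F^[4]` maps the plane into `Q₁`,
and `F^[6] x = (1,0)` for every `x`. -/
theorem case_a_zero_b_neg_one :
    F 0 (-1) (1, 0) = (1, 0) ∧
    (∀ x : ℝ × ℝ, (F 0 (-1))^[4] x ∈ Q1) ∧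
    (∀ x : ℝ × ℝ, (F 0 (-1))^[6] x = (1, 0)) := by
  have h4 : MapsTo (F 0 (-1))^[4] univ {p | 0 ≤ p.2 ∧ p.2 ≤ p.1 - 1} :=
    mapsTo_F_abs_le.comp (mapsTo_F_one_le.comp (mapsTo_F_sub_le.comp mapsTo_F_univ))
  have h6 : MapsTo (F 0 (-1))^[6] univ {(1, 0)} :=
    mapsTo_F_ray.comp (mapsTo_F_wedge.comp h4)
  refine ⟨mapsTo_F_ray (by norm_num), fun x => ?_, fun x => h6 (mem_univ x)⟩
  obtain ⟨hy, hxy⟩ := h4 (mem_univ x)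
  exact ⟨by linarith, hy⟩
end

section
/- Let b ∈ ℝ with 0 ≤ b < 3/16 and let F = F_{−1,b}. Then p = (−b, 2b−1) is a fixed point of F, and the sets P = {(−5b, −4b+1), (9b−2, −1), (−9b+2, 10b−3), (−19b+4, 2b−1), (−21b+4, −16b+3)} and Q = {((b+2)/7, (6b−9)/7), ((4−5b)/7, 2b−1), ((4−19b)/7, (16b−3)/7), (−5b, (4b+1)/7), ((31b−8)/7, (−32b−1)/7)} are periodic orbits of F of minimal period 5, with F mapping each listed point to the next one and the last listed point to the first in each set. -/
/-! Since 5 is prime, a closed cycle of length 5 is a genuine 5-orbit as soon as its first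
step moves; every step of `F` used below stays inside one quadrant, where `F` is affine. -/

section PeriodicOrbit

variable {f : ℝ × ℝ → ℝ × ℝ}

theorem isPeriodicOrbit_of_prime {n : ℕ} [Fact n.Prime] {x : ℝ × ℝ}
    (hper : Function.IsPeriodicPt f n x) (hfix : ¬ Function.IsFixedPt f x) :
    IsPeriodicOrbit f n ((fun k : ℕ => f^[k] x) '' Set.Iio n) :=
  ⟨x, Function.minimalPeriod_eq_prime hper hfix, Nat.Prime.pos Fact.out, rfl⟩

theorem image_iterate_Iio_five {p₀ p₁ p₂ p₃ p₄ : ℝ × ℝ}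
    (h₀ : f p₀ = p₁) (h₁ : f p₁ = p₂) (h₂ : f p₂ = p₃) (h₃ : f p₃ = p₄) :
    (fun k : ℕ => f^[k] p₀) '' Set.Iio 5 = {p₀, p₁, p₂, p₃, p₄} := by
  have hIio : Set.Iio 5 = ({0, 1, 2, 3, 4} : Set ℕ) := by
    ext k
    simp only [Set.mem_Iio, Set.mem_insert_iff, Set.mem_singleton_iff]
    omega
  simp [hIio, Set.image_insert_eq, Function.iterate_succ_apply', h₀, h₁, h₂, h₃]

theorem isPeriodicOrbit_five {p₀ p₁ p₂ p₃ p₄ : ℝ × ℝ}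
    (h₀ : f p₀ = p₁) (h₁ : f p₁ = p₂) (h₂ : f p₂ = p₃) (h₃ : f p₃ = p₄) (h₄ : f p₄ = p₀)
    (hne : p₀ ≠ p₁) :
    IsPeriodicOrbit f 5 {p₀, p₁, p₂, p₃, p₄} := by
  have : Fact (Nat.Prime 5) := ⟨by norm_num⟩
  have hper : Function.IsPeriodicPt f 5 p₀ := by
    simp [Function.IsPeriodicPt, Function.IsFixedPt, Function.iterate_succ_apply',
      h₀, h₁, h₂, h₃, h₄]
  have hfix : ¬ Function.IsFixedPt f p₀ := fun h => hne (h.symm.trans h₀)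
  rw [← image_iterate_Iio_five h₀ h₁ h₂ h₃]
  exact isPeriodicOrbit_of_prime hper hfix

end PeriodicOrbit

theorem F_mk_of_abs {a b x y u v : ℝ} (hx : |x| = u) (hy : |y| = v) :
    F a b (x, y) = (u - y + a, x - v + b) := by
  simp [F, hx, hy]

theorem F_neg_one_fixedPt {b : ℝ} (hb₁ : 0 ≤ b) (hb₂ : b ≤ 1/2) :
    F (-1) b (-b, 2*b-1) = (-b, 2*b-1) := by
  rw [F_mk_of_abs (abs_of_nonpos (by linarith)) (abs_of_nonpos (by linarith))]
  congr 1 <;> ring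

theorem F_neg_one_cycle_P {b : ℝ} (hb₁ : 0 ≤ b) (hb₂ : b ≤ 3/16) :
    F (-1) b (-5*b, -4*b+1) = (9*b-2, -1) ∧
    F (-1) b (9*b-2, -1) = (-9*b+2, 10*b-3) ∧
    F (-1) b (-9*b+2, 10*b-3) = (-19*b+4, 2*b-1) ∧
    F (-1) b (-19*b+4, 2*b-1) = (-21*b+4, -16*b+3) ∧
    F (-1) b (-21*b+4, -16*b+3) = (-5*b, -4*b+1) := by
  refine ⟨?_, ?_, ?_, ?_, ?_⟩
  · rw [F_mk_of_abs (abs_of_nonpos (by linarith)) (abs_of_nonneg (by linarith))]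
    congr 1 <;> ring
  · rw [F_mk_of_abs (abs_of_nonpos (by linarith)) (abs_of_nonpos (by linarith))]
    congr 1 <;> ring
  · rw [F_mk_of_abs (abs_of_nonneg (by linarith)) (abs_of_nonpos (by linarith))]
    congr 1 <;> ring
  · rw [F_mk_of_abs (abs_of_nonneg (by linarith)) (abs_of_nonpos (by linarith))]
    congr 1 <;> ring
  · rw [F_mk_of_abs (abs_of_nonneg (by linarith)) (abs_of_nonneg (by linarith))]
    congr 1 <;> ring

theorem F_neg_one_cycle_Q {b : ℝ} (hb₁ : 0 ≤ b) (hb₂ : b ≤ 3/16) :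
    F (-1) b ((b+2)/7, (6*b-9)/7) = ((4-5*b)/7, 2*b-1) ∧
    F (-1) b ((4-5*b)/7, 2*b-1) = ((4-19*b)/7, (16*b-3)/7) ∧
    F (-1) b ((4-19*b)/7, (16*b-3)/7) = (-5*b, (4*b+1)/7) ∧
    F (-1) b (-5*b, (4*b+1)/7) = ((31*b-8)/7, (-32*b-1)/7) ∧
    F (-1) b ((31*b-8)/7, (-32*b-1)/7) = ((b+2)/7, (6*b-9)/7) := by
  refine ⟨?_, ?_, ?_, ?_, ?_⟩
  · rw [F_mk_of_abs (abs_of_nonneg (by linarith)) (abs_of_nonpos (by linarith))]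
    congr 1 <;> ring
  · rw [F_mk_of_abs (abs_of_nonneg (by linarith)) (abs_of_nonpos (by linarith))]
    congr 1 <;> ring
  · rw [F_mk_of_abs (abs_of_nonneg (by linarith)) (abs_of_nonpos (by linarith))]
    congr 1 <;> ring
  · rw [F_mk_of_abs (abs_of_nonpos (by linarith)) (abs_of_nonneg (by linarith))]
    congr 1 <;> ring
  · rw [F_mk_of_abs (abs_of_nonpos (by linarith)) (abs_of_nonpos (by linarith))]
    congr 1 <;> ring

/-- For `0 ≤ b < 3/16` and `F = F_{-1,b}`: `p = (-b, 2b-1)` is a fixed point, and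
the sets `P` and `Q` below are periodic orbits of minimal period 5, `F` mapping each
listed point to the next one and the last to the first. -/
theorem case_b_in_zero_three_sixteenth (b : ℝ) (hb1 : 0 ≤ b) (hb2 : b < 3/16) :
    F (-1) b (-b, 2*b-1) = (-b, 2*b-1) ∧
    (IsPeriodicOrbit (F (-1) b) 5
        {(-5*b, -4*b+1), (9*b-2, -1), (-9*b+2, 10*b-3), (-19*b+4, 2*b-1),
         (-21*b+4, -16*b+3)} ∧
      F (-1) b (-5*b, -4*b+1) = (9*b-2, -1) ∧
      F (-1) b (9*b-2, -1) = (-9*b+2, 10*b-3) ∧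
      F (-1) b (-9*b+2, 10*b-3) = (-19*b+4, 2*b-1) ∧
      F (-1) b (-19*b+4, 2*b-1) = (-21*b+4, -16*b+3) ∧
      F (-1) b (-21*b+4, -16*b+3) = (-5*b, -4*b+1)) ∧
    (IsPeriodicOrbit (F (-1) b) 5
        {((b+2)/7, (6*b-9)/7), ((4-5*b)/7, 2*b-1), ((4-19*b)/7, (16*b-3)/7),
         (-5*b, (4*b+1)/7), ((31*b-8)/7, (-32*b-1)/7)} ∧
      F (-1) b ((b+2)/7, (6*b-9)/7) = ((4-5*b)/7, 2*b-1) ∧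
      F (-1) b ((4-5*b)/7, 2*b-1) = ((4-19*b)/7, (16*b-3)/7) ∧
      F (-1) b ((4-19*b)/7, (16*b-3)/7) = (-5*b, (4*b+1)/7) ∧
      F (-1) b (-5*b, (4*b+1)/7) = ((31*b-8)/7, (-32*b-1)/7) ∧
      F (-1) b ((31*b-8)/7, (-32*b-1)/7) = ((b+2)/7, (6*b-9)/7)) := by
  obtain ⟨e₀, e₁, e₂, e₃, e₄⟩ := F_neg_one_cycle_P hb1 hb2.le
  obtain ⟨f₀, f₁, f₂, f₃, f₄⟩ := F_neg_one_cycle_Q hb1 hb2.le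
  refine ⟨F_neg_one_fixedPt hb1 (by linarith),
    ⟨isPeriodicOrbit_five e₀ e₁ e₂ e₃ e₄ ?_, e₀, e₁, e₂, e₃, e₄⟩,
    ⟨isPeriodicOrbit_five f₀ f₁ f₂ f₃ f₄ ?_, f₀, f₁, f₂, f₃, f₄⟩⟩
  all_goals
    rw [Ne, Prod.ext_iff]
    intro h
    linarith [h.2]
end
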